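/- Let G be a finite group and p a prime. Then the intersection of the normalizers of all weakly normal p-subgroups of G equals the intersection of the normalizers of all Sylow p-subgroups of G. That is, ⋂_{H a weakly normal p-subgroup of G} N_G(H) = ⋂_{P ∈ Syl_p(G)} N_G(P). -/

import Mathlib

/-- The conjugate `H^g = g⁻¹ H g` of a subgroup `H`. -/
def conjSubgroup {G : Type*} [Group G] (g : G) (H : Subgroup G) : Subgroup G :=
  H.map (MulAut.conj g⁻¹).toMonoidHom

/-- `H` is pronormal in `G` if for every `g ∈ G` there exists
`x ∈ ⟨H, H^g⟩` with `H^x = H^g`. -/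
def IsPronormal {G : Type*} [Group G] (H : Subgroup G) : Prop :=
  ∀ g : G, ∃ x ∈ H ⊔ conjSubgroup g H, conjSubgroup x H = conjSubgroup g H

/-- `H` is weakly normal in `G` if `H^g ≤ N_G(H)` implies `g ∈ N_G(H)`. -/
def IsWeaklyNormal {G : Type*} [Group G] (H : Subgroup G) : Prop :=
  ∀ g : G, conjSubgroup g H ≤ Subgroup.normalizer (H : Set G) → g ∈ Subgroup.normalizer (H : Set G)

/-- `H` is an `𝓗`-subgroup of `G` if `N_G(H) ∩ H^g ≤ H` for all `g ∈ G`. -/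
def IsHSubgroup {G : Type*} [Group G] (H : Subgroup G) : Prop :=
  ∀ g : G, Subgroup.normalizer (H : Set G) ⊓ conjSubgroup g H ≤ H

/-- `H` is an `NE`-subgroup of `G` if `H = N_G(H) ∩ H^G`. -/
def IsNESubgroup {G : Type*} [Group G] (H : Subgroup G) : Prop :=
  H = Subgroup.normalizer (H : Set G) ⊓ Subgroup.normalClosure (H : Set G)

/-- A subgroup `H` satisfies the subnormalizer condition in `G` if for every
subgroup `K` of `G` such that `H` is a normal subgroup of `K`, one has
`N_G(K) ≤ N_G(H)`. -/
def SubnormalizerCondition {G : Type*} [Group G] (H : Subgroup G) : Prop :=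
  ∀ K : Subgroup G, H ≤ K → (H.subgroupOf K).Normal → Subgroup.normalizer (K : Set G) ≤ Subgroup.normalizer (H : Set G)


/-!
A weakly normal subgroup `H` of a group `K ≥ H` with the normalizer condition (e.g. a finite
`p`-group) is normal in `K`: `K ∩ N(H)` is self-normalizing in `K`, because any `x ∈ K`
normalizing it carries `H` into `N(H)`. So a weakly normal `p`-subgroup is normalized by every
Sylow subgroup `P ≥ H`, and an element normalizing `P` maps `H` into `P ≤ N(H)`, hence
normalizes `H`. Conversely, Sylow subgroups are weakly normal, since a Sylow subgroup
normalizing `P` is contained in `P`.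
-/

open Subgroup

section

variable {G : Type*} [Group G]

lemma mem_conjSubgroup {g x : G} {H : Subgroup G} :
    x ∈ conjSubgroup g H ↔ g * x * g⁻¹ ∈ H := by
  refine ⟨?_, fun hx => ⟨g * x * g⁻¹, hx, by simp [mul_assoc]⟩⟩
  rintro ⟨y, hy, rfl⟩
  simpa [mul_assoc] using hy

lemma conjSubgroup_le_of_mem_normalizer {g : G} {H K : Subgroup G} (hHK : H ≤ K)
    (hg : g ∈ normalizer (K : Set G)) : conjSubgroup g H ≤ K := fun x hx =>
  (mem_normalizer_iff.mp hg x).mpr (hHK (mem_conjSubgroup.mp hx))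

lemma IsWeaklyNormal.mem_normalizer_of_le {H K : Subgroup G} (hw : IsWeaklyNormal H)
    (hHK : H ≤ K) (hK : K ≤ normalizer (H : Set G)) {g : G} (hg : g ∈ normalizer (K : Set G)) :
    g ∈ normalizer (H : Set G) :=
  hw g ((conjSubgroup_le_of_mem_normalizer hHK hg).trans hK)

lemma IsWeaklyNormal.le_normalizer {H K : Subgroup G} (hw : IsWeaklyNormal H) (hHK : H ≤ K)
    (hK : NormalizerCondition K) : K ≤ normalizer (H : Set G) := by
  set M := K ⊓ normalizer (H : Set G)
  have hMK : M ≤ K := inf_le_left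
  have hM_self : normalizer (M.subgroupOf K : Set K) = M.subgroupOf K := by
    refine le_antisymm (fun x hx => ?_) Subgroup.le_normalizer
    rw [← subgroupOf_normalizer_eq hMK, mem_subgroupOf] at hx
    rw [mem_subgroupOf]
    exact ⟨x.2, hw.mem_normalizer_of_le (le_inf hHK Subgroup.le_normalizer) inf_le_right hx⟩
  have hM_top := normalizerCondition_iff_only_full_group_self_normalizing.mp hK _ hM_self
  exact (subgroupOf_eq_top.mp hM_top).trans inf_le_right

lemma Sylow.isWeaklyNormal {p : ℕ} (P : Sylow p G) : IsWeaklyNormal (P : Subgroup G) := by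
  intro g hg
  have hconj : conjSubgroup g P = ((g⁻¹ • P : Sylow p G) : Subgroup G) := rfl
  have hle : ((g⁻¹ • P : Sylow p G) : Subgroup G) ≤ P := by
    rwa [hconj, P.coe_coe, ← inf_eq_left, (g⁻¹ • P).isPGroup'.inf_normalizer_sylow,
      inf_eq_left] at hg
  have hP : g⁻¹ • P = P := Sylow.ext ((g⁻¹ • P).is_maximal' P.isPGroup' hle).symm
  exact inv_mem_iff.mp (Sylow.smul_eq_iff_mem_normalizer.mp hP)

end

theorem iInf_normalizer_weaklyNormal_p_eq_iInf_normalizer_sylow_p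
    (G : Type*) [Group G] [Finite G] (p : ℕ) (hp : p.Prime) :
    (⨅ (H : Subgroup G) (_ : IsPGroup p H ∧ IsWeaklyNormal H), Subgroup.normalizer (H : Set G)) =
      ⨅ P : Sylow p G, Subgroup.normalizer ((P : Subgroup G) : Set G) := by
  have : Fact p.Prime := ⟨hp⟩
  refine le_antisymm (le_iInf fun P => iInf₂_le (P : Subgroup G) ⟨P.isPGroup', P.isWeaklyNormal⟩) ?_
  refine le_iInf₂ fun H ⟨hH, hw⟩ g hg => ?_
  obtain ⟨P, hHP⟩ := hH.exists_le_sylow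
  have : Group.IsNilpotent P := P.isPGroup'.isNilpotent
  have hPH : (P : Subgroup G) ≤ normalizer (H : Set G) :=
    hw.le_normalizer hHP Group.normalizerCondition_of_isNilpotent
  exact hw.mem_normalizer_of_le hHP hPH (mem_iInf.mp hg P)
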